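/- A natural number n is divisible by 4 if and only if a_1 + 2·a_2 + 2·a_3 ≡ 0 (mod 4), where a_1, a_2, a_3 are the factoradic digits of n; equivalently, 4 ∣ n iff inv(0,1) + 2(inv(0,2)+inv(0,3)+inv(1,2)+inv(1,3)+inv(2,3)) ≡ 0 (mod 4) for the inversion indicators of the 4-prefix permutation of n. -/
import Mathlib

/-- The `i`-th factoradic digit of `n`. -/
def fdigit (i n : ℕ) : ℕ := (n / i.factorial) % (i + 1)

/-- `4 ∣ n` iff `a_1 + 2·a_2 + 2·a_3 ≡ 0 (mod 4)` for the factoradic digits of `n`. -/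
theorem div_four_iff (n : ℕ) :
    4 ∣ n ↔ 4 ∣ (fdigit 1 n + 2 * fdigit 2 n + 2 * fdigit 3 n) := by
  have h1 : fdigit 1 n = n % 2 := by simp [fdigit, Nat.factorial]
  have h2 : fdigit 2 n = (n / 2) % 3 := by simp [fdigit, Nat.factorial]
  have h3 : fdigit 3 n = (n / 6) % 4 := by norm_num [fdigit, Nat.factorial]
  rw [h1, h2, h3]
  have e2 : n / 2 = 12 * (n / 24) + (n % 24) / 2 := by omega
  have e3 : n / 6 = 4 * (n / 24) + (n % 24) / 6 := by omega
  have hr : n % 24 < 24 := Nat.mod_lt _ (by norm_num)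
  interval_cases h : n % 24 <;> omega
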